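/- arXiv:1911.11626 — 3 statements merged into one kernel-verified Lean document; each statement's English description precedes it below -/
import Mathlib

section
/- In the Sisyphus system with μ = 0, if ẏ = h(x) with h invertible and differentiable and ẋ f' (x) = −V' (y), then y satisfies the Newtonian equation m(ẏ) ÿ = −V' (y) with velocity-dependent mass m(v) = (h⁻¹)' (v) · f' (h⁻¹(v)). -/
/-! Writing `ẏ = h(x)`, the chain rule gives `ÿ = h'(x) ẋ`, and `x = h⁻¹(ẏ)` turns the mass into
`m(ẏ) = (h⁻¹)'(h x) f'(x)`. Since `(h⁻¹)'(h x) h'(x) = 1`, the product `m(ẏ) ÿ` collapses to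
`f'(x) ẋ = -V'(y)`. -/

theorem Function.LeftInverse.deriv_mul_deriv {𝕜 : Type*} [NontriviallyNormedField 𝕜]
    {g h : 𝕜 → 𝕜} (hgh : Function.LeftInverse g h) {a : 𝕜}
    (hg : DifferentiableAt 𝕜 g (h a)) (hh : DifferentiableAt 𝕜 h a) :
    deriv g (h a) * deriv h a = 1 := by
  rw [← deriv_comp a hg hh, hgh.comp_eq_id, deriv_id]

theorem stmt4_general (f V h hinv x y : ℝ → ℝ)
    (hhd : Differentiable ℝ h) (hhinvd : Differentiable ℝ hinv)
    (hli : Function.LeftInverse hinv h)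
    (hxd : Differentiable ℝ x)
    (h1 : ∀ t, deriv y t = h (x t))
    (h2 : ∀ t, deriv x t * deriv f (x t) = -(deriv V (y t))) :
    ∀ t, (deriv hinv (deriv y t) * deriv f (hinv (deriv y t))) * deriv (deriv y) t
        = -(deriv V (y t)) := by
  intro t
  have hÿ : deriv (deriv y) t = deriv h (x t) * deriv x t := by
    rw [show deriv y = h ∘ x from funext h1, deriv_comp t (hhd _) (hxd _)]
  rw [hÿ, h1 t, hli (x t)]
  calc deriv hinv (h (x t)) * deriv f (x t) * (deriv h (x t) * deriv x t)
      = (deriv hinv (h (x t)) * deriv h (x t)) * (deriv x t * deriv f (x t)) := by ring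
    _ = -(deriv V (y t)) := by rw [hli.deriv_mul_deriv (hhinvd _) (hhd _), h2 t, one_mul]

/-- Sisyphus system with `μ = 0`: if `ẏ = h(x)` with `h` an invertible differentiable
map (with differentiable inverse `hinv`) and `ẋ f'(x) = -V'(y)`, then `y` satisfies
the Newtonian equation `m(ẏ) ÿ = -V'(y)` with velocity-dependent mass
`m v = (h⁻¹)'(v) * f'(h⁻¹ v)`. -/
theorem stmt4 (f V h hinv x y : ℝ → ℝ)
    (hfd : Differentiable ℝ f) (hVd : Differentiable ℝ V)
    (hhd : Differentiable ℝ h) (hhinvd : Differentiable ℝ hinv)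
    (hli : Function.LeftInverse hinv h) (hri : Function.RightInverse hinv h)
    (hxd : Differentiable ℝ x) (hyd : Differentiable ℝ y)
    (hy2 : Differentiable ℝ (deriv y))
    (h1 : ∀ t, deriv y t = h (x t))
    (h2 : ∀ t, deriv x t * deriv f (x t) = -(deriv V (y t))) :
    ∀ t, (deriv hinv (deriv y t) * deriv f (hinv (deriv y t))) * deriv (deriv y) t
        = -(deriv V (y t)) :=
  stmt4_general f V h hinv x y hhd hhinvd hli hxd h1 h2
end

section
/- Eliminating y from the Sisyphus equations μẍ = f' (x)ẏ − g' (x) and ẋ f' (x) = −V' (y) with V(y) = y²/2 yields the Liénard-II type equation ẍ + [f' f'' /(μ + f' ²)] ẋ² + g' /(μ + f' ²) = 0. -/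
/-! The constraint `ẋ f'(x) = -y` expresses `y` through `x`, so differentiating it gives
`ẏ = -(ẍ f'(x) + f''(x) ẋ²)`. Substituting this into `μ ẍ = f'(x) ẏ - g'(x)` gives
`(μ + f'(x)²) ẍ + f'(x) f''(x) ẋ² + g'(x) = 0`, and one divides by `μ + f'(x)²`. -/

theorem hasDerivAt_deriv_mul_comp {x F : ℝ → ℝ} {t : ℝ} (hx : DifferentiableAt ℝ x t)
    (hx' : DifferentiableAt ℝ (deriv x) t) (hF : DifferentiableAt ℝ F (x t)) :
    HasDerivAt (fun s => deriv x s * F (x s))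
      (deriv (deriv x) t * F (x t) + deriv F (x t) * deriv x t ^ 2) t := by
  refine (hx'.hasDerivAt.mul (hF.hasDerivAt.comp t hx.hasDerivAt)).congr_deriv ?_
  simp only [Function.comp_apply]
  ring

theorem stmt5_general (f g x y : ℝ → ℝ) (μ : ℝ)
    (hf : ContDiff ℝ 2 f)
    (hxd : Differentiable ℝ x) (hx2 : Differentiable ℝ (deriv x))
    (hne : ∀ t, μ + (deriv f (x t)) ^ 2 ≠ 0)
    (h1 : ∀ t, μ * deriv (deriv x) t = deriv f (x t) * deriv y t - deriv g (x t))
    (h2 : ∀ t, deriv x t * deriv f (x t) = -(y t)) :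
    ∀ t, deriv (deriv x) t
        + (deriv f (x t) * deriv (deriv f) (x t) / (μ + (deriv f (x t)) ^ 2))
            * (deriv x t) ^ 2
        + deriv g (x t) / (μ + (deriv f (x t)) ^ 2) = 0 := by
  intro t
  have hy : y = fun s => -(deriv x s * deriv f (x s)) := funext fun s => by rw [h2, neg_neg]
  have hy_deriv : deriv y t = -(deriv (deriv x) t * deriv f (x t)
      + deriv (deriv f) (x t) * deriv x t ^ 2) := by
    rw [hy]
    exact (hasDerivAt_deriv_mul_comp (hxd t) (hx2 t)
      (hf.differentiable_deriv_two (x t))).neg.deriv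
  have hne_t := hne t
  field_simp
  linear_combination h1 t + deriv f (x t) * hy_deriv

/-- Eliminating `y` from the Sisyphus equations `μ ẍ = f'(x) ẏ - g'(x)` and
`ẋ f'(x) = -V'(y)` with `V y = y²/2` (so `V' y = y`) yields the Liénard-II type
equation `ẍ + (f' f''/(μ + f'²)) ẋ² + g'/(μ + f'²) = 0`. -/
theorem stmt5 (f g x y : ℝ → ℝ) (μ : ℝ)
    (hf : ContDiff ℝ 2 f) (hg : ContDiff ℝ 2 g)
    (hxd : Differentiable ℝ x) (hx2 : Differentiable ℝ (deriv x))
    (hyd : Differentiable ℝ y)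
    (hne : ∀ t, μ + (deriv f (x t)) ^ 2 ≠ 0)
    (h1 : ∀ t, μ * deriv (deriv x) t = deriv f (x t) * deriv y t - deriv g (x t))
    (h2 : ∀ t, deriv x t * deriv f (x t) = -(y t)) :
    ∀ t, deriv (deriv x) t
        + (deriv f (x t) * deriv (deriv f) (x t) / (μ + (deriv f (x t)) ^ 2))
            * (deriv x t) ^ 2
        + deriv g (x t) / (μ + (deriv f (x t)) ^ 2) = 0 :=
  stmt5_general f g x y μ hf hxd hx2 hne h1 h2
end

section
/- For the Hamiltonian H(F,G) = G⁴/4 − G²/2 + F²/(2(G² − 1)²), Hamilton's equations Ḟ = ∂H/∂G, Ġ = −∂H/∂F imply, after eliminating F, that y defined via ẏ = G (and y = F/(G² − 1)) satisfies (ẏ² − 1)ÿ = −y, provided G² ≠ 1. -/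
/-! In the quotient-rule numerator `Ḟ (G² - 1) - 2 F G Ġ` of `ẏ`, Hamilton's equations make the
`F²`-terms `∓ 2 F² G / (G² - 1)²` cancel, leaving `(G³ - G)(G² - 1) = G (G² - 1)²`. -/

theorem HasDerivAt.div_sq_sub_one {F G : ℝ → ℝ} {F' G' t : ℝ} (hF : HasDerivAt F F' t)
    (hG : HasDerivAt G G' t) (hne : G t ^ 2 ≠ 1) :
    HasDerivAt (fun s => F s / (G s ^ 2 - 1))
      ((F' * (G t ^ 2 - 1) - F t * (2 * G t * G')) / (G t ^ 2 - 1) ^ 2) t := by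
  have hden : HasDerivAt (fun s => G s ^ 2 - 1) (2 * G t * G') t := by
    simpa [mul_comm] using (hG.pow 2).sub_const 1
  exact hF.div hden (sub_ne_zero.2 hne)

theorem quotient_rule_hamilton_eq {f g : ℝ} (hg : g ^ 2 ≠ 1) :
    ((g ^ 3 - g - 2 * f ^ 2 * g / (g ^ 2 - 1) ^ 3) * (g ^ 2 - 1)
        - f * (2 * g * (-f / (g ^ 2 - 1) ^ 2))) / (g ^ 2 - 1) ^ 2 = g := by
  have hd : g ^ 2 - 1 ≠ 0 := sub_ne_zero.2 hg
  field_simp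
  ring

theorem sq_sub_one_mul_neg_div_sq {f g : ℝ} (hg : g ^ 2 ≠ 1) :
    (g ^ 2 - 1) * (-f / (g ^ 2 - 1) ^ 2) = -(f / (g ^ 2 - 1)) := by
  have hd : g ^ 2 - 1 ≠ 0 := sub_ne_zero.2 hg
  field_simp

/-- For the Hamiltonian `H(F,G) = G⁴/4 - G²/2 + F²/(2(G²-1)²)`, Hamilton's
equations `Ḟ = ∂H/∂G`, `Ġ = -∂H/∂F` imply, after eliminating `F`, that `y`
defined by `y = F/(G² - 1)` satisfies `ẏ = G` and `(ẏ² - 1) ÿ = -y`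
(i.e. `(G² - 1) Ġ = -y`), provided `G² ≠ 1`. -/
theorem stmt12 (F G : ℝ → ℝ)
    (hF : Differentiable ℝ F) (hG : Differentiable ℝ G)
    (hne : ∀ t, (G t) ^ 2 ≠ 1)
    (h1 : ∀ t, deriv F t
        = (G t) ^ 3 - G t - 2 * (F t) ^ 2 * G t / ((G t) ^ 2 - 1) ^ 3)
    (h2 : ∀ t, deriv G t = -(F t) / ((G t) ^ 2 - 1) ^ 2)
    (y : ℝ → ℝ) (hy : y = fun t => F t / ((G t) ^ 2 - 1)) :
    (∀ t, deriv y t = G t) ∧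
    (∀ t, ((G t) ^ 2 - 1) * deriv G t = -(y t)) := by
  subst hy
  refine ⟨fun t => ?_, fun t => ?_⟩
  · rw [((hF t).hasDerivAt.div_sq_sub_one (hG t).hasDerivAt (hne t)).deriv, h1, h2]
    exact quotient_rule_hamilton_eq (hne t)
  · rw [h2]
    exact sq_sub_one_mul_neg_div_sq (hne t)
end
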